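/- In the triad example on the path network 1–2–3 with the stated potential outcomes and the assignment mechanism that draws uniformly from assignment vectors with exactly two units treated, all unit-level spillover effects on the treated for units 1 and 3 equal +1, yet the exposure-mapping estimand τ((1,1),(1,0)) = (1/2)Σ_{i∈{1,3}}(E[Y_i | T_i=(1,1)] − E[Y_i | T_i=(1,0)]) equals −1. -/

import Mathlib

open Finset
open scoped Classical

noncomputable section

/-- Probability of event `A` under mass function `p` on a finite space. -/
def prb {Ω : Type*} [Fintype Ω] (p : Ω → ℝ) (A : Ω → Prop) : ℝ :=
  ∑ ω, if A ω then p ω else 0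

/-- Unnormalized expectation of `f` on the event `A`. -/
def eiv {Ω : Type*} [Fintype Ω] (p : Ω → ℝ) (f : Ω → ℝ) (A : Ω → Prop) : ℝ :=
  ∑ ω, if A ω then p ω * f ω else 0

/-- Expectation of `f`. -/
def expv {Ω : Type*} [Fintype Ω] (p : Ω → ℝ) (f : Ω → ℝ) : ℝ := ∑ ω, p ω * f ω

/-- Conditional expectation of `f` given the event `A`. -/
def cexp {Ω : Type*} [Fintype Ω] (p : Ω → ℝ) (f : Ω → ℝ) (A : Ω → Prop) : ℝ :=
  eiv p f A / prb p A

/-- Conditional probability of `A` given `B`. -/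
def cpr {Ω : Type*} [Fintype Ω] (p : Ω → ℝ) (A B : Ω → Prop) : ℝ :=
  prb p (fun ω => A ω ∧ B ω) / prb p B

/-- Real value of a boolean treatment. -/
def bR : Bool → ℝ := fun x => if x then 1 else 0

/-- Assignment: uniform over the three vectors with exactly two treated units. -/
def pTriad : (Fin 3 → Bool) → ℝ := fun d =>
  if d = ![true, true, false] ∨ d = ![true, false, true] ∨ d = ![false, true, true]
  then 1/3 else 0

/-- Potential outcomes of unit 1 on the path 1–2–3:
`Y₁(1,0,0)=0, Y₁(1,1,0)=1, Y₁(1,0,1)=2, Y₁(1,1,1)=3`, and `0` otherwise. -/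
def Y1triad : (Fin 3 → Bool) → ℝ := fun d =>
  if d 0 = true then bR (d 1) + 2 * bR (d 2) else 0

/-- Potential outcomes of unit 3 on the path 1–2–3:
`Y₃(0,0,1)=0, Y₃(0,1,1)=1, Y₃(1,0,1)=2, Y₃(1,1,1)=3`, and `0` otherwise. -/
def Y3triad : (Fin 3 → Bool) → ℝ := fun d =>
  if d 2 = true then bR (d 1) + 2 * bR (d 0) else 0

/-! Each exposure event `Tᵢ = t` contains exactly one assignment of the design's support, so every
conditional mean is the outcome at that assignment. Unit 2 is untreated only in `(1,0,1)`, where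
both endpoints are treated; there unit `i` also gets the `+2` from the other endpoint, which
outweighs the `+1` spillover from unit 2, so each contrast is `1 - 2 = -1`. -/

lemma cexp_eq_of_unique_support {Ω : Type*} [Fintype Ω] {p : Ω → ℝ} {A : Ω → Prop} {ω₀ : Ω}
    (f : Ω → ℝ) (hA : A ω₀) (hp : p ω₀ ≠ 0) (huniq : ∀ ω, A ω → p ω ≠ 0 → ω = ω₀) :
    cexp p f A = f ω₀ := by
  have hsum : ∀ g : Ω → ℝ, (∀ ω, p ω = 0 → g ω = 0) →
      (∑ ω, if A ω then g ω else 0) = g ω₀ := fun g hg => by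
    rw [Finset.sum_eq_single ω₀ (fun ω _ hne => ?_) (by simp), if_pos hA]
    split_ifs with hAω
    · exact hg ω (not_not.mp fun hpω => hne (huniq ω hAω hpω))
    · rfl
  rw [cexp, eiv, prb, hsum (fun ω => p ω * f ω) (fun ω h => by simp [h]),
    hsum p (fun _ h => h), mul_div_cancel_left₀ _ hp]

def triadDesign : Finset (Fin 3 → Bool) :=
  {![true, true, false], ![true, false, true], ![false, true, true]}

lemma pTriad_ne_zero_iff {d : Fin 3 → Bool} : pTriad d ≠ 0 ↔ d ∈ triadDesign := by
  simp only [triadDesign, Finset.mem_insert, Finset.mem_singleton, pTriad]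
  split_ifs with h <;> simp [h]

lemma cexp_pTriad_eq {A : (Fin 3 → Bool) → Prop} {ω₀ : Fin 3 → Bool} (f : (Fin 3 → Bool) → ℝ)
    (h₀ : ω₀ ∈ triadDesign) (hA : ∀ ω ∈ triadDesign, A ω ↔ ω = ω₀) :
    cexp pTriad f A = f ω₀ :=
  cexp_eq_of_unique_support f ((hA ω₀ h₀).2 rfl) (pTriad_ne_zero_iff.2 h₀)
    fun ω hAω hp => (hA ω (pTriad_ne_zero_iff.1 hp)).1 hAω

/-- in the triad example on the path network 1–2–3 (units 1 and 3 each have the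
single neighbor 2, so `Tᵢ = (Dᵢ, D₂)` for `i ∈ {1,3}`), with assignment uniform over the
vectors with exactly two treated units, all unit-level spillover effects on the treated equal
`+1`, yet `τ((1,1),(1,0)) = -1`. -/
theorem stmt10 :
    (∀ d3 : Bool, Y1triad ![true, true, d3] - Y1triad ![true, false, d3] = 1) ∧
    (∀ d1 : Bool, Y3triad ![d1, true, true] - Y3triad ![d1, false, true] = 1) ∧
    (1 / 2 : ℝ) *
      ((cexp pTriad Y1triad (fun d => d 0 = true ∧ d 1 = true) -
        cexp pTriad Y1triad (fun d => d 0 = true ∧ d 1 = false)) +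
       (cexp pTriad Y3triad (fun d => d 2 = true ∧ d 1 = true) -
        cexp pTriad Y3triad (fun d => d 2 = true ∧ d 1 = false))) = -1 := by
  refine ⟨fun d3 => by cases d3 <;> simp [Y1triad, bR, Matrix.cons_val_two],
    fun d1 => by cases d1 <;> simp [Y3triad, bR, Matrix.cons_val_two], ?_⟩
  rw [cexp_pTriad_eq (ω₀ := ![true, true, false]) _ (by decide) (by decide),
    cexp_pTriad_eq (ω₀ := ![true, false, true]) _ (by decide) (by decide),
    cexp_pTriad_eq (ω₀ := ![false, true, true]) _ (by decide) (by decide),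
    cexp_pTriad_eq (ω₀ := ![true, false, true]) _ (by decide) (by decide)]
  norm_num [Y1triad, Y3triad, bR, Matrix.cons_val_two]
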